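/- arXiv:1602.01587 — 2 statements merged into one kernel-verified Lean document; each statement's English description precedes it below -/
import Mathlib

section
/- Let X be a separable metrizable topological space. Then M (the space of finite signed Borel measures on X) equipped with the quotient topology T is a k-space (compactly generated topological space): a subset A ⊆ M is T-closed if and only if A ∩ K is T-closed for every T-compact subset K ⊆ M. -/
open MeasureTheory TopologicalSpace Topology

noncomputable def sPair {X : Type*} [TopologicalSpace X] [MeasurableSpace X]
    (μ : SignedMeasure X) (f : BoundedContinuousFunction X ℝ) : ℝ :=
  (∫ x, f x ∂μ.toJordanDecomposition.posPart) - ∫ x, f x ∂μ.toJordanDecomposition.negPart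

/-- The weak topology σ on the space of finite signed Borel measures, induced by
integration against bounded continuous functions. -/
noncomputable def sigmaTop (X : Type*) [TopologicalSpace X] [MeasurableSpace X] :
    TopologicalSpace (SignedMeasure X) :=
  ⨅ f : BoundedContinuousFunction X ℝ,
    TopologicalSpace.induced (fun μ => sPair μ f) inferInstance

/-- The map q(μ,ν) = μ - ν from pairs of finite nonnegative measures to signed measures. -/
noncomputable def qMap (X : Type*) [TopologicalSpace X] [MeasurableSpace X] :
    FiniteMeasure X × FiniteMeasure X → SignedMeasure X :=
  fun p => p.1.toMeasure.toSignedMeasure - p.2.toMeasure.toSignedMeasure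

/-- The quotient topology T coinduced by q from the (product of the) weak-convergence
topology on pairs of finite nonnegative measures. -/
noncomputable def TTop (X : Type*) [TopologicalSpace X] [MeasurableSpace X]
    [OpensMeasurableSpace X] : TopologicalSpace (SignedMeasure X) :=
  TopologicalSpace.coinduced (qMap X) inferInstance

/-!
Weak convergence of finite measures on a separable metrizable space is metrizable: for a fixed
`c ≠ 0`, the map `μ ↦ (mass μ, normalize (μ + c))` embeds the finite measures into
`ℝ≥0 × ProbabilityMeasure X`, which carries the Lévy–Prokhorov metric. Hence the domain of `q` is
sequential, so compactly generated, and so is its quotient `T`. Moreover `T` is Hausdorff: it is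
finer than the weak topology of integrals against bounded continuous functions, and these
separate signed measures. In a Hausdorff compactly generated space closedness is tested on
compact sets.
-/

open scoped NNReal BoundedContinuousFunction

namespace MeasureTheory.FiniteMeasure

section

variable {Ω : Type*} [MeasurableSpace Ω]

lemma mass_add (μ ν : FiniteMeasure Ω) : (μ + ν).mass = μ.mass + ν.mass := by
  simp [mass, coeFn_add]

lemma add_ne_zero_of_ne_zero_right (μ : FiniteMeasure Ω) {ν : FiniteMeasure Ω} (hν : ν ≠ 0) :
    μ + ν ≠ 0 := by
  rw [← mass_nonzero_iff, mass_add]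
  exact (add_pos_of_nonneg_of_pos zero_le ((mass_nonzero_iff ν).mpr hν).bot_lt).ne'

variable [Nonempty Ω]

lemma integral_eq_mass_mul_integral_normalize (μ : FiniteMeasure Ω) (f : Ω → ℝ) :
    ∫ x, f x ∂μ = μ.mass * ∫ x, f x ∂μ.normalize := by
  conv_lhs => rw [μ.self_eq_mass_smul_normalize, toMeasure_smul, integral_smul_nnreal_measure]
  rfl

variable [TopologicalSpace Ω] [OpensMeasurableSpace Ω]

lemma continuous_normalize_add {c : FiniteMeasure Ω} (hc : c ≠ 0) :
    Continuous fun μ : FiniteMeasure Ω ↦ (μ + c).normalize :=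
  continuous_iff_continuousAt.mpr fun μ ↦
    tendsto_normalize_of_tendsto ((continuous_add_const c).tendsto μ)
      (μ.add_ne_zero_of_ne_zero_right hc)

/-- Shifting by `c ≠ 0` keeps `normalize` away from its junk value at `0`. -/
lemma isInducing_mass_normalize_add {c : FiniteMeasure Ω} (hc : c ≠ 0) :
    IsInducing fun μ : FiniteMeasure Ω ↦ (μ.mass, (μ + c).normalize) := by
  set g := fun μ : FiniteMeasure Ω ↦ (μ.mass, (μ + c).normalize)
  refine ⟨le_antisymm (continuous_iff_le_induced.mp
    (continuous_mass.prodMk (continuous_normalize_add hc))) ?_⟩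
  refine continuous_id_iff_le.mp ?_
  let : TopologicalSpace (FiniteMeasure Ω) := .induced g inferInstance
  refine continuous_iff_forall_continuous_integral.mpr fun f ↦ ?_
  set φ := fun p : ℝ≥0 × ProbabilityMeasure Ω ↦
    ((p.1 + c.mass : ℝ≥0) : ℝ) * ∫ x, f x ∂p.2 - ∫ x, f x ∂c
  have recover : (fun μ : FiniteMeasure Ω ↦ ∫ x, f x ∂μ) = φ ∘ g := funext fun μ ↦ by
    have := (μ + c).integral_eq_mass_mul_integral_normalize f
    rw [toMeasure_add, integral_add_measure (f.integrable _) (f.integrable _), mass_add] at this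
    simp only [φ, g, Function.comp_apply]
    push_cast at this ⊢
    linarith
  simp only [id, recover]
  refine Continuous.comp ?_ continuous_induced_dom
  exact ((NNReal.continuous_coe.comp (continuous_fst.add continuous_const)).mul
    ((ProbabilityMeasure.continuous_integral_boundedContinuousFunction f).comp continuous_snd)).sub
    continuous_const

end

instance {Ω : Type*} [MeasurableSpace Ω] [TopologicalSpace Ω] [OpensMeasurableSpace Ω]
    [PseudoMetrizableSpace Ω] [SeparableSpace Ω] : PseudoMetrizableSpace (FiniteMeasure Ω) := by
  rcases isEmpty_or_nonempty Ω with hΩ | hΩ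
  · have : Subsingleton (FiniteMeasure Ω) :=
      ⟨fun μ ν ↦ toMeasure_injective (Measure.eq_zero_of_isEmpty _ |>.trans
        (Measure.eq_zero_of_isEmpty _).symm)⟩
    infer_instance
  · let δ : ProbabilityMeasure Ω := ⟨Measure.dirac hΩ.some, inferInstance⟩
    exact (isInducing_mass_normalize_add δ.toFiniteMeasure_nonzero).pseudoMetrizableSpace

end MeasureTheory.FiniteMeasure

section SignedMeasure

variable {α : Type*} [MeasurableSpace α]

lemma MeasureTheory.SignedMeasure.posPart_add_eq_negPart_add_of_eq_sub {s : SignedMeasure α} {a b : Measure α}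
    [IsFiniteMeasure a] [IsFiniteMeasure b] (hs : s = a.toSignedMeasure - b.toSignedMeasure) :
    s.toJordanDecomposition.posPart + b = s.toJordanDecomposition.negPart + a := by
  rw [← Measure.toSignedMeasure_eq_toSignedMeasure_iff, Measure.toSignedMeasure_add,
    Measure.toSignedMeasure_add, add_comm _ a.toSignedMeasure]
  rw [← s.toSignedMeasure_toJordanDecomposition, JordanDecomposition.toSignedMeasure] at hs
  exact sub_eq_sub_iff_add_eq_add.mp hs

variable [TopologicalSpace α]

lemma sPair_qMap [OpensMeasurableSpace α] (p : FiniteMeasure α × FiniteMeasure α) (f : α →ᵇ ℝ) :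
    sPair (qMap α p) f = ∫ x, f x ∂p.1 - ∫ x, f x ∂p.2 := by
  have h := congrArg (fun m : Measure α ↦ ∫ x, f x ∂m)
    (SignedMeasure.posPart_add_eq_negPart_add_of_eq_sub (rfl : qMap α p = _))
  simp only [integral_add_measure (f.integrable _) (f.integrable _)] at h
  unfold sPair
  linarith

lemma sPair_injective [HasOuterApproxClosed α] [BorelSpace α] :
    Function.Injective fun (μ : SignedMeasure α) (f : α →ᵇ ℝ) ↦ sPair μ f := by
  intro μ ν hμν
  rw [← μ.toSignedMeasure_toJordanDecomposition, ← ν.toSignedMeasure_toJordanDecomposition,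
    JordanDecomposition.toSignedMeasure, JordanDecomposition.toSignedMeasure,
    sub_eq_sub_iff_add_eq_add, ← Measure.toSignedMeasure_add, ← Measure.toSignedMeasure_add]
  refine Measure.toSignedMeasure_congr (ext_of_forall_integral_eq_of_IsFiniteMeasure fun f ↦ ?_)
  have := congrFun hμν f
  simp only [sPair] at this
  rw [integral_add_measure (f.integrable _) (f.integrable _),
    integral_add_measure (f.integrable _) (f.integrable _)]
  linarith

end SignedMeasure

section QuotientTopology

variable (X : Type*) [TopologicalSpace X] [MeasurableSpace X] [OpensMeasurableSpace X]

lemma continuous_sPair_TTop (f : X →ᵇ ℝ) : Continuous[TTop X, _] fun μ ↦ sPair μ f := by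
  refine continuous_coinduced_dom.mpr ?_
  simp only [Function.comp_def, sPair_qMap]
  exact ((FiniteMeasure.continuous_integral_boundedContinuousFunction f).comp continuous_fst).sub
    ((FiniteMeasure.continuous_integral_boundedContinuousFunction f).comp continuous_snd)

lemma t2Space_TTop [HasOuterApproxClosed X] [BorelSpace X] : @T2Space _ (TTop X) :=
  let := TTop X
  .of_injective_continuous sPair_injective (continuous_pi (continuous_sPair_TTop X))

lemma compactlyGeneratedSpace_TTop [PseudoMetrizableSpace X] [SeparableSpace X] :
    @CompactlyGeneratedSpace _ (TTop X) :=
  @compactlyGeneratedSpace_of_coinduced _ _ _ (TTop X) _ _ continuous_coinduced_rng rfl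

end QuotientTopology

/-- the space of finite signed Borel measures with the quotient topology
`T` is a k-space: a set `A` is `T`-closed iff `A ∩ K` is `T`-closed for every
`T`-compact `K`. -/
theorem stmt_3 {X : Type*} [TopologicalSpace X] [MeasurableSpace X] [BorelSpace X]
    [MetrizableSpace X] [SeparableSpace X] (A : Set (SignedMeasure X)) :
    @IsClosed _ (TTop X) A ↔
      ∀ K : Set (SignedMeasure X), @IsCompact _ (TTop X) K →
        @IsClosed _ (TTop X) (A ∩ K) := by
  let := TTop X
  have := t2Space_TTop X
  have := compactlyGeneratedSpace_TTop X
  exact CompactlyGeneratedSpace.isClosed_iff_of_t2 A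
end

section
/- Let X be a separable metrizable topological space. Then every σ-compact subset K of M (the space of finite signed Borel measures on X) is metrizable in the subspace topology induced by the weak topology σ. -/
open MeasureTheory TopologicalSpace Topology

/-! A countable family `G` of bounded continuous functions already separates finite Borel measures
on a separable metrizable space: approximate from above the indicators of a countable π-system of
closed sets generating the Borel σ-algebra. Comparing Jordan parts, `G` also separates signed
measures, so `μ ↦ (sPair μ g)_{g ∈ G}` is a continuous injection of the σ-compact set `K` into the
metrizable space `G → ℝ`, hence an embedding. -/

open Set BoundedContinuousFunction
open scoped NNReal ENNReal

lemma exists_countable_isPiSystem_isClosed_borel_eq_generateFrom (X : Type*) [TopologicalSpace X]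
    [SecondCountableTopology X] :
    ∃ C : Set (Set X), C.Countable ∧ IsPiSystem C ∧ univ ∈ C ∧ (∀ F ∈ C, IsClosed F) ∧
      borel X = MeasurableSpace.generateFrom C := by
  obtain ⟨B, hBc, -, hB⟩ := exists_countable_basis X
  refine ⟨(fun t : Set (Set X) => (⋃₀ t)ᶜ) '' {t | t.Finite ∧ t ⊆ B},
    (countable_ofPred_finite_subset hBc).image _, ?_, ⟨∅, ⟨finite_empty, empty_subset _⟩, by simp⟩,
    ?_, ?_⟩
  · rintro _ ⟨t, ⟨htf, htB⟩, rfl⟩ _ ⟨s, ⟨hsf, hsB⟩, rfl⟩ -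
    exact ⟨t ∪ s, ⟨htf.union hsf, union_subset htB hsB⟩, by simp only [sUnion_union, compl_union]⟩
  · rintro _ ⟨t, ⟨-, htB⟩, rfl⟩
    exact (isOpen_sUnion fun U hU => hB.isOpen (htB hU)).isClosed_compl
  · rw [hB.borel_eq_generateFrom]
    apply le_antisymm
    · refine MeasurableSpace.generateFrom_le fun U hU => ?_
      have hUc : (⋃₀ {U})ᶜ ∈ (fun t : Set (Set X) => (⋃₀ t)ᶜ) '' {t | t.Finite ∧ t ⊆ B} :=
        ⟨{U}, ⟨finite_singleton U, singleton_subset_iff.mpr hU⟩, rfl⟩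
      simpa using (MeasurableSpace.measurableSet_generateFrom hUc).compl
    · refine MeasurableSpace.generateFrom_le ?_
      rintro _ ⟨t, ⟨htf, htB⟩, rfl⟩
      exact (htf.measurableSet_sUnion fun U hU =>
        MeasurableSpace.measurableSet_generateFrom (htB hU)).compl

namespace MeasureTheory

lemma SignedMeasure.eq_of_posPart_add_negPart_eq {X : Type*} [MeasurableSpace X]
    {μ ν : SignedMeasure X}
    (h : μ.toJordanDecomposition.posPart + ν.toJordanDecomposition.negPart
      = ν.toJordanDecomposition.posPart + μ.toJordanDecomposition.negPart) : μ = ν := by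
  rw [← μ.toSignedMeasure_toJordanDecomposition, ← ν.toSignedMeasure_toJordanDecomposition,
    JordanDecomposition.toSignedMeasure, JordanDecomposition.toSignedMeasure,
    sub_eq_sub_iff_add_eq_add, ← Measure.toSignedMeasure_add, ← Measure.toSignedMeasure_add]
  exact Measure.toSignedMeasure_congr h

variable {X : Type*} [TopologicalSpace X] [MeasurableSpace X]

lemma exists_countable_forall_lintegral_eq_imp_eq [HasOuterApproxClosed X]
    [SecondCountableTopology X] [BorelSpace X] :
    ∃ G : Set (X →ᵇ ℝ≥0), G.Countable ∧ ∀ (μ ν : Measure X) [IsFiniteMeasure μ]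
      [IsFiniteMeasure ν], (∀ g ∈ G, ∫⁻ x, g x ∂μ = ∫⁻ x, g x ∂ν) → μ = ν := by
  obtain ⟨C, hCc, hCpi, hCuniv, hCcl, hCgen⟩ :=
    exists_countable_isPiSystem_isClosed_borel_eq_generateFrom X
  have := hCc.to_subtype
  refine ⟨⋃ F : C, range (hCcl F F.2).apprSeq, countable_iUnion fun _ => countable_range _, ?_⟩
  intro μ ν _ _ h
  have hC : ∀ F ∈ C, μ F = ν F := fun F hF =>
    tendsto_nhds_unique
      ((HasOuterApproxClosed.tendsto_lintegral_apprSeq (hCcl F hF) μ).congr fun n =>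
        h _ (mem_iUnion.2 ⟨⟨F, hF⟩, mem_range_self n⟩))
      (HasOuterApproxClosed.tendsto_lintegral_apprSeq (hCcl F hF) ν)
  exact ext_of_generate_finite C (by rw [BorelSpace.measurable_eq (α := X), hCgen]) hCpi hC
    (hC univ hCuniv)

lemma lintegral_eq_of_integral_eq {μ ν : Measure X} [OpensMeasurableSpace X] [IsFiniteMeasure μ]
    [IsFiniteMeasure ν] {f : X →ᵇ ℝ≥0} (h : ∫ x, (f x : ℝ) ∂μ = ∫ x, (f x : ℝ) ∂ν) :
    ∫⁻ x, f x ∂μ = ∫⁻ x, f x ∂ν := by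
  refine (ENNReal.toReal_eq_toReal_iff' (f.lintegral_lt_top_of_nnreal μ).ne
    (f.lintegral_lt_top_of_nnreal ν).ne).mp ?_
  rwa [f.toReal_lintegral_coe_eq_integral, f.toReal_lintegral_coe_eq_integral]

lemma exists_countable_forall_integral_eq_imp_eq [HasOuterApproxClosed X]
    [SecondCountableTopology X] [BorelSpace X] :
    ∃ G : Set (X →ᵇ ℝ), G.Countable ∧ ∀ (μ ν : Measure X) [IsFiniteMeasure μ]
      [IsFiniteMeasure ν], (∀ g ∈ G, ∫ x, g x ∂μ = ∫ x, g x ∂ν) → μ = ν := by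
  obtain ⟨G, hGc, hG⟩ := exists_countable_forall_lintegral_eq_imp_eq (X := X)
  let toReal : (X →ᵇ ℝ≥0) → X →ᵇ ℝ := fun f => f.comp _ isometry_subtype_coe.lipschitz
  refine ⟨toReal '' G, hGc.image _, fun μ ν _ _ h => hG μ ν fun g hg => ?_⟩
  exact lintegral_eq_of_integral_eq (h _ (mem_image_of_mem _ hg))

lemma SignedMeasure.eq_of_forall_sPair_eq [OpensMeasurableSpace X] {G : Set (X →ᵇ ℝ)}
    (hG : ∀ (μ ν : Measure X) [IsFiniteMeasure μ] [IsFiniteMeasure ν],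
      (∀ g ∈ G, ∫ x, g x ∂μ = ∫ x, g x ∂ν) → μ = ν)
    {μ ν : SignedMeasure X} (h : ∀ g ∈ G, sPair μ g = sPair ν g) : μ = ν := by
  refine eq_of_posPart_add_negPart_eq (hG _ _ fun g hg => ?_)
  have hg := h g hg
  rw [sPair, sPair] at hg
  rw [integral_add_measure (g.integrable _) (g.integrable _),
    integral_add_measure (g.integrable _) (g.integrable _)]
  linarith

lemma continuous_sPair (f : X →ᵇ ℝ) : Continuous[sigmaTop X, _] (fun μ => sPair μ f) :=
  continuous_iff_le_induced.2 (iInf_le _ f)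

end MeasureTheory

/-- every `σ`-compact subset of the space of finite signed Borel measures
is metrizable in the subspace topology induced by the weak topology `σ`. -/
theorem stmt_5 {X : Type*} [TopologicalSpace X] [MeasurableSpace X] [BorelSpace X]
    [MetrizableSpace X] [SeparableSpace X] (K : Set (SignedMeasure X))
    (hK : @IsCompact _ (sigmaTop X) K) :
    @MetrizableSpace K
      (TopologicalSpace.induced (Subtype.val : K → SignedMeasure X) (sigmaTop X)) := by
  let : TopologicalSpace (SignedMeasure X) := sigmaTop X
  have : CompactSpace K := isCompact_iff_compactSpace.mp hK
  have : SecondCountableTopology X := by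
    let := metrizableSpaceMetric X
    exact UniformSpace.secondCountable_of_separable X
  obtain ⟨G, hGc, hG⟩ := exists_countable_forall_integral_eq_imp_eq (X := X)
  have := hGc.to_subtype
  let Φ : K → G → ℝ := fun μ g => sPair μ.1 g
  have hΦ : Continuous Φ :=
    continuous_pi fun g => (continuous_sPair g.1).comp continuous_subtype_val
  have hΦinj : Function.Injective Φ := fun μ ν h =>
    Subtype.ext (SignedMeasure.eq_of_forall_sPair_eq hG fun g hg => congrFun h ⟨g, hg⟩)
  exact (hΦ.isClosedEmbedding hΦinj).isEmbedding.metrizableSpace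
end
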